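/- Let M, U, V : ℝ² → ℝ be smooth functions of (θ, v) satisfying the plane-polarized colliding plane wave evolution equations U_{θv} = U_θ U_v, V_{θv} = ½(U_θ V_v + U_v V_θ), and M_{θv} = ½(−U_θ U_v + V_θ V_v), and let G = U_{vv} − ½(U_v² + V_v²) + U_v M_v. Then ∂_θ(G e^{-U}) = 0, and consequently for all θ₋, θ₊, v one has the jump condition G(θ₊, v) = G(θ₋, v) e^{U(θ₊,v) − U(θ₋,v)}. In particular, if G(θ₀, ·) ≡ 0 for some θ₀ then G ≡ 0. -/

import Mathlib

/-!
Commuting `∂_θ` past `∂_v` (Schwarz) and substituting the evolution equations turns the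
θ-derivative of the constraint into `G_θ = U_θ G`. For each fixed `v` this is a linear ODE in `θ`,
so `G e^{-U}` does not depend on `θ`, which is the jump condition.
-/

open Real

/-- Partial derivative with respect to the first variable `θ`. -/
noncomputable def pd1 (F : ℝ → ℝ → ℝ) : ℝ → ℝ → ℝ := fun θ v => deriv (fun t => F t v) θ

/-- Partial derivative with respect to the second variable `v`. -/
noncomputable def pd2 (F : ℝ → ℝ → ℝ) : ℝ → ℝ → ℝ := fun θ v => deriv (fun s => F θ s) v

open Function

section PartialDerivatives

variable {F : ℝ → ℝ → ℝ} {θ v : ℝ}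

lemma hasDerivAt_slice_fst (hF : DifferentiableAt ℝ (uncurry F) (θ, v)) :
    HasDerivAt (fun t => F t v) (fderiv ℝ (uncurry F) (θ, v) (1, 0)) θ :=
  (hF.hasFDerivAt.comp_hasDerivAt θ ((hasDerivAt_id θ).prodMk (hasDerivAt_const θ v)) :)

lemma hasDerivAt_slice_snd (hF : DifferentiableAt ℝ (uncurry F) (θ, v)) :
    HasDerivAt (fun s => F θ s) (fderiv ℝ (uncurry F) (θ, v) (0, 1)) v :=
  (hF.hasFDerivAt.comp_hasDerivAt v ((hasDerivAt_const v θ).prodMk (hasDerivAt_id v)) :)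

lemma pd1_eq_fderiv (hF : DifferentiableAt ℝ (uncurry F) (θ, v)) :
    pd1 F θ v = fderiv ℝ (uncurry F) (θ, v) (1, 0) :=
  (hasDerivAt_slice_fst hF).deriv

lemma pd2_eq_fderiv (hF : DifferentiableAt ℝ (uncurry F) (θ, v)) :
    pd2 F θ v = fderiv ℝ (uncurry F) (θ, v) (0, 1) :=
  (hasDerivAt_slice_snd hF).deriv

lemma hasDerivAt_pd1 (hF : DifferentiableAt ℝ (uncurry F) (θ, v)) :
    HasDerivAt (fun t => F t v) (pd1 F θ v) θ :=
  pd1_eq_fderiv hF ▸ hasDerivAt_slice_fst hF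

lemma hasDerivAt_pd2 (hF : DifferentiableAt ℝ (uncurry F) (θ, v)) :
    HasDerivAt (fun s => F θ s) (pd2 F θ v) v :=
  pd2_eq_fderiv hF ▸ hasDerivAt_slice_snd hF

lemma uncurry_pd1 (hF : Differentiable ℝ (uncurry F)) :
    uncurry (pd1 F) = fun p => fderiv ℝ (uncurry F) p (1, 0) :=
  funext fun _ => pd1_eq_fderiv (hF _)

lemma uncurry_pd2 (hF : Differentiable ℝ (uncurry F)) :
    uncurry (pd2 F) = fun p => fderiv ℝ (uncurry F) p (0, 1) :=
  funext fun _ => pd2_eq_fderiv (hF _)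

lemma fderiv_fderiv_apply {E : Type*} [NormedAddCommGroup E] [NormedSpace ℝ E] {f : E → ℝ}
    {p : E} (hf : DifferentiableAt ℝ (fderiv ℝ f) p) (u w : E) :
    fderiv ℝ (fun q => fderiv ℝ f q w) p u = fderiv ℝ (fderiv ℝ f) p u w := by
  rw [fderiv_clm_apply hf (differentiableAt_const w)]
  simp

variable {m n : WithTop ℕ∞}

lemma contDiff_uncurry_pd1 (hF : ContDiff ℝ n (uncurry F)) (hmn : m + 1 ≤ n) :
    ContDiff ℝ m (uncurry (pd1 F)) := by
  rw [uncurry_pd1 (hF.differentiable (by rintro rfl; simp at hmn))]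
  exact (hF.fderiv_right hmn).clm_apply contDiff_const

lemma contDiff_uncurry_pd2 (hF : ContDiff ℝ n (uncurry F)) (hmn : m + 1 ≤ n) :
    ContDiff ℝ m (uncurry (pd2 F)) := by
  rw [uncurry_pd2 (hF.differentiable (by rintro rfl; simp at hmn))]
  exact (hF.fderiv_right hmn).clm_apply contDiff_const

lemma differentiable_uncurry_pd1 (hF : ContDiff ℝ 2 (uncurry F)) :
    Differentiable ℝ (uncurry (pd1 F)) :=
  (contDiff_uncurry_pd1 hF (m := 1) le_rfl).differentiable one_ne_zero

lemma differentiable_uncurry_pd2 (hF : ContDiff ℝ 2 (uncurry F)) :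
    Differentiable ℝ (uncurry (pd2 F)) :=
  (contDiff_uncurry_pd2 hF (m := 1) le_rfl).differentiable one_ne_zero

lemma pd2_mul {G : ℝ → ℝ → ℝ} (hF : DifferentiableAt ℝ (uncurry F) (θ, v))
    (hG : DifferentiableAt ℝ (uncurry G) (θ, v)) :
    pd2 (fun t s => F t s * G t s) θ v = pd2 F θ v * G θ v + F θ v * pd2 G θ v :=
  ((hasDerivAt_pd2 hF).mul (hasDerivAt_pd2 hG)).deriv

lemma pd2_pd1 (hF : ContDiff ℝ 2 (uncurry F)) : pd2 (pd1 F) = pd1 (pd2 F) := by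
  have hF1 : Differentiable ℝ (uncurry F) := hF.differentiable two_ne_zero
  ext θ v
  have hF2 := (hF.fderiv_right (m := 1) le_rfl).differentiable one_ne_zero (θ, v)
  rw [pd2_eq_fderiv (differentiable_uncurry_pd1 hF _),
    pd1_eq_fderiv (differentiable_uncurry_pd2 hF _),
    uncurry_pd1 hF1, uncurry_pd2 hF1, fderiv_fderiv_apply hF2, fderiv_fderiv_apply hF2]
  exact (hF.contDiffAt.isSymmSndFDerivAt (by simp)).eq _ _

lemma pd1_pd2_eq_of_pd2_pd1_eq {R : ℝ → ℝ → ℝ} (hF : ContDiff ℝ 2 (uncurry F))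
    (h : ∀ θ v, pd2 (pd1 F) θ v = R θ v) : pd1 (pd2 F) = R := by
  rw [← pd2_pd1 hF]; exact funext₂ h

end PartialDerivatives

noncomputable def vConstraint (U V M : ℝ → ℝ → ℝ) : ℝ → ℝ → ℝ := fun θ v =>
  pd2 (pd2 U) θ v - (1/2) * ((pd2 U θ v)^2 + (pd2 V θ v)^2) + pd2 U θ v * pd2 M θ v

section CollidingWaves

variable {U V M : ℝ → ℝ → ℝ}

lemma pd1_pd2_pd2_of_pd2_pd1_eq_mul (hU : ContDiff ℝ 3 (uncurry U))
    (e1 : ∀ θ v, pd2 (pd1 U) θ v = pd1 U θ v * pd2 U θ v) (θ v : ℝ) :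
    pd1 (pd2 (pd2 U)) θ v = pd1 U θ v * (pd2 U θ v ^ 2 + pd2 (pd2 U) θ v) := by
  have hU2 : ContDiff ℝ 2 (uncurry U) := hU.of_le (by norm_num)
  rw [← pd2_pd1 (contDiff_uncurry_pd2 hU (by norm_num)), pd1_pd2_eq_of_pd2_pd1_eq hU2 e1,
    pd2_mul (differentiable_uncurry_pd1 hU2 _) (differentiable_uncurry_pd2 hU2 _), e1]
  ring

lemma hasDerivAt_vConstraint (hU : ContDiff ℝ 3 (uncurry U)) (hV : ContDiff ℝ 2 (uncurry V))
    (hM : ContDiff ℝ 2 (uncurry M))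
    (e1 : ∀ θ v, pd2 (pd1 U) θ v = pd1 U θ v * pd2 U θ v)
    (e2 : ∀ θ v, pd2 (pd1 V) θ v
        = (1/2) * (pd1 U θ v * pd2 V θ v + pd2 U θ v * pd1 V θ v))
    (e3 : ∀ θ v, pd2 (pd1 M) θ v
        = (1/2) * (-(pd1 U θ v * pd2 U θ v) + pd1 V θ v * pd2 V θ v)) (θ v : ℝ) :
    HasDerivAt (fun t => vConstraint U V M t v) (pd1 U θ v * vConstraint U V M θ v) θ := by
  have hU2 : ContDiff ℝ 2 (uncurry U) := hU.of_le (by norm_num)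
  have hUvv := hasDerivAt_pd1
    (differentiable_uncurry_pd2 (contDiff_uncurry_pd2 hU (by norm_num)) (θ, v))
  have hUv := hasDerivAt_pd1 (differentiable_uncurry_pd2 hU2 (θ, v))
  have hVv := hasDerivAt_pd1 (differentiable_uncurry_pd2 hV (θ, v))
  have hMv := hasDerivAt_pd1 (differentiable_uncurry_pd2 hM (θ, v))
  refine ((hUvv.sub (((hUv.pow 2).add (hVv.pow 2)).const_mul (1/2))).add
    (hUv.mul hMv)).congr_deriv ?_
  rw [pd1_pd2_pd2_of_pd2_pd1_eq_mul hU e1, pd1_pd2_eq_of_pd2_pd1_eq hU2 e1,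
    pd1_pd2_eq_of_pd2_pd1_eq hV e2, pd1_pd2_eq_of_pd2_pd1_eq hM e3, vConstraint]
  ring

end CollidingWaves

lemma hasDerivAt_mul_exp_neg {g u : ℝ → ℝ} {a x : ℝ} (hg : HasDerivAt g (a * g x) x)
    (hu : HasDerivAt u a x) : HasDerivAt (fun t => g t * exp (-u t)) 0 x :=
  (hg.mul hu.neg.exp).congr_deriv (by ring)

lemma eq_mul_exp_sub_of_hasDerivAt {g u a : ℝ → ℝ} (hg : ∀ x, HasDerivAt g (a x * g x) x)
    (hu : ∀ x, HasDerivAt u (a x) x) (x y : ℝ) : g y = g x * exp (u y - u x) := by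
  have hconst : g y * exp (-u y) = g x * exp (-u x) :=
    is_const_of_deriv_eq_zero (fun t => (hasDerivAt_mul_exp_neg (hg t) (hu t)).differentiableAt)
      (fun t => (hasDerivAt_mul_exp_neg (hg t) (hu t)).deriv) y x
  calc g y = g y * exp (-u y) * exp (u y) := by
        rw [mul_assoc, ← exp_add, neg_add_cancel, exp_zero, mul_one]
    _ = g x * exp (u y - u x) := by rw [hconst, mul_assoc, ← exp_add, neg_add_eq_sub]

/-- For smooth solutions of the plane-polarized colliding plane wave evolution equations,
with `G = U_{vv} − ½(U_v² + V_v²) + U_v M_v`, one has `∂_θ(G e^{-U}) = 0`, hence the jump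
condition `G(θ₊,v) = G(θ₋,v) e^{U(θ₊,v) − U(θ₋,v)}`; in particular if `G(θ₀,·) ≡ 0` for
some `θ₀` then `G ≡ 0`. -/
theorem v_constraint_jump
    (M U V : ℝ → ℝ → ℝ)
    (hM : ContDiff ℝ (⊤ : ℕ∞) (fun p : ℝ × ℝ => M p.1 p.2))
    (hU : ContDiff ℝ (⊤ : ℕ∞) (fun p : ℝ × ℝ => U p.1 p.2))
    (hV : ContDiff ℝ (⊤ : ℕ∞) (fun p : ℝ × ℝ => V p.1 p.2))
    (e1 : ∀ θ v, pd2 (pd1 U) θ v = pd1 U θ v * pd2 U θ v)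
    (e2 : ∀ θ v, pd2 (pd1 V) θ v
        = (1/2) * (pd1 U θ v * pd2 V θ v + pd2 U θ v * pd1 V θ v))
    (e3 : ∀ θ v, pd2 (pd1 M) θ v
        = (1/2) * (-(pd1 U θ v * pd2 U θ v) + pd1 V θ v * pd2 V θ v))
    (G : ℝ → ℝ → ℝ)
    (hG : ∀ θ v, G θ v = pd2 (pd2 U) θ v
        - (1/2) * ((pd2 U θ v)^2 + (pd2 V θ v)^2) + pd2 U θ v * pd2 M θ v) :
    (∀ θ v, pd1 (fun t s => G t s * Real.exp (-(U t s))) θ v = 0)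
    ∧ (∀ θm θp v, G θp v = G θm v * Real.exp (U θp v - U θm v))
    ∧ (∀ θ₀, (∀ v, G θ₀ v = 0) → ∀ θ v, G θ v = 0) := by
  obtain rfl : G = vConstraint U V M := funext₂ hG
  have hG_deriv := hasDerivAt_vConstraint (hU.of_le (WithTop.coe_le_coe.mpr le_top))
    (hV.of_le (WithTop.coe_le_coe.mpr le_top)) (hM.of_le (WithTop.coe_le_coe.mpr le_top)) e1 e2 e3
  have hU_deriv (θ v : ℝ) := hasDerivAt_pd1 (hU.differentiable (by simp) (θ, v))
  have jump (θm θp v : ℝ) := eq_mul_exp_sub_of_hasDerivAt (hG_deriv · v) (hU_deriv · v) θm θp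
  refine ⟨fun θ v => (hasDerivAt_mul_exp_neg (hG_deriv θ v) (hU_deriv θ v)).deriv, jump, ?_⟩
  intro θ₀ h₀ θ v
  rw [jump θ₀ θ v, h₀, zero_mul]
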